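/- Let p be a prime number, R a commutative ring, and 𝔞 ⊆ R an ideal equipped with a divided power structure, such that p·x = 0 for every x ∈ 𝔞. Then for every y ∈ 𝕎 R all of whose coefficients lie in 𝔞: (1) p·y = 0 in 𝕎 R; (2) verschiebung(z)·y = 0 for every z ∈ 𝕎 R. Equivalently, (p·𝕎(R) + V(𝕎(R)))·W(𝔞) = 0, where W(𝔞) denotes the set of Witt vectors with all coefficients in 𝔞. -/

import Mathlib

/-!
Since `p! = p · (p-1)!` and `p·𝔞 = 0`, the divided powers give `x ^ p = p! γₚ(x) = 0` for every
`x ∈ 𝔞`. The `n`-th coefficient of the Frobenius `F w` is `w_n ^ p + p · Q_n(w)` with `Q_n` an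
integral polynomial without constant term, so `F` kills every Witt vector with coefficients in
`𝔞`, in particular `y` and `V y`. The identities `p · y = F (V y)` and `V z · y = V (z · F y)`
then finish the proof.
-/

open MvPolynomial WittVector

theorem DividedPowers.pow_eq_zero_of_natCast_mul_eq_zero {A : Type*} [CommRing A] {I : Ideal A}
    (γ : DividedPowers I) {n : ℕ} (hn : n ≠ 0) (hI : ∀ x ∈ I, (n : A) * x = 0) {x : A}
    (hx : x ∈ I) : x ^ n = 0 := by
  have hfact : (n.factorial : A) = n * (n - 1).factorial := by
    rw [← Nat.mul_factorial_pred hn, Nat.cast_mul]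
  rw [← γ.factorial_mul_dpow_eq_pow hx, hfact, mul_assoc]
  exact hI _ (I.mul_mem_left _ (γ.dpow_mem hn hx))

theorem MvPolynomial.aeval_mem_of_constantCoeff_eq_zero {σ R S : Type*} [CommSemiring R]
    [CommRing S] [Algebra R S] (I : Ideal S) {v : σ → S} (hv : ∀ i, v i ∈ I)
    {φ : MvPolynomial σ R} (hφ : constantCoeff φ = 0) : aeval v φ ∈ I := by
  have hv0 : (fun i => Ideal.Quotient.mkₐ R I (v i)) = 0 := by
    ext i
    exact Ideal.Quotient.eq_zero_iff_mem.2 (hv i)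
  rw [← Ideal.Quotient.eq_zero_iff_mem, ← Ideal.Quotient.mkₐ_eq_mk R, comp_aeval_apply, hv0,
    aeval_zero, hφ, map_zero]

namespace WittVector

variable {p : ℕ} [hp : Fact p.Prime] {R : Type*} [CommRing R] {𝔞 : Ideal R}

theorem constantCoeff_frobeniusPolyAux (n : ℕ) :
    MvPolynomial.constantCoeff (frobeniusPolyAux p n) = 0 := by
  -- read off from `F 0 = 0`, since `frobeniusPoly p n = X n ^ p + p * frobeniusPolyAux p n`
  have hpoly : MvPolynomial.constantCoeff (frobeniusPoly p n) = 0 := by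
    have hcoeff : (0 : WittVector p ℤ).coeff = 0 := funext (zero_coeff p ℤ)
    simpa [hcoeff, eval_zero] using (coeff_frobenius (0 : WittVector p ℤ) n).symm
  rw [frobeniusPoly, map_add, map_mul, map_pow, constantCoeff_X, constantCoeff_C,
    zero_pow hp.out.ne_zero, zero_add] at hpoly
  exact (mul_eq_zero.1 hpoly).resolve_left (Nat.cast_ne_zero.2 hp.out.ne_zero)

theorem frobenius_eq_zero_of_coeff_mem
    (hpow : ∀ x ∈ 𝔞, x ^ p = 0) (hp𝔞 : ∀ x ∈ 𝔞, (p : R) * x = 0) {w : WittVector p R}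
    (hw : ∀ k, w.coeff k ∈ 𝔞) : frobenius w = 0 := by
  ext n
  have haux : aeval w.coeff (frobeniusPolyAux p n) ∈ 𝔞 :=
    aeval_mem_of_constantCoeff_eq_zero 𝔞 hw (constantCoeff_frobeniusPolyAux n)
  rw [coeff_frobenius, zero_coeff, frobeniusPoly, map_add, map_mul, map_pow, aeval_X, aeval_C,
    algebraMap_int_eq, eq_intCast, Int.cast_natCast, hpow _ (hw n), hp𝔞 _ haux, add_zero]

theorem verschiebung_coeff_mem {w : WittVector p R}
    (hw : ∀ k, w.coeff k ∈ 𝔞) (k : ℕ) : (verschiebung w).coeff k ∈ 𝔞 := by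
  cases k with
  | zero => simpa only [verschiebung_coeff_zero] using 𝔞.zero_mem
  | succ k => simpa only [verschiebung_coeff_succ] using hw k

end WittVector

/-- Let `𝔞` be an ideal of `R` with a divided power structure, with `p·𝔞 = 0`. Then every
`p`-typical Witt vector `y` all of whose coefficients lie in `𝔞` satisfies `p·y = 0` and
`V(z)·y = 0` for all `z`; i.e. `(p·𝕎(R) + V(𝕎(R)))·W(𝔞) = 0`. -/
theorem stmt13 (p : ℕ) [Fact p.Prime] (R : Type*) [CommRing R]
    (𝔞 : Ideal R) (γ : DividedPowers 𝔞) (hp𝔞 : ∀ x ∈ 𝔞, (p : R) * x = 0)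
    (y : WittVector p R) (hy : ∀ k, y.coeff k ∈ 𝔞) :
    (p : WittVector p R) * y = 0 ∧
      ∀ z : WittVector p R, WittVector.verschiebung z * y = 0 := by
  have hpow : ∀ x ∈ 𝔞, x ^ p = 0 := fun x hx =>
    γ.pow_eq_zero_of_natCast_mul_eq_zero (Fact.out : p.Prime).ne_zero hp𝔞 hx
  have hF : ∀ w : WittVector p R, (∀ k, w.coeff k ∈ 𝔞) → frobenius w = 0 := fun _ hw =>
    frobenius_eq_zero_of_coeff_mem hpow hp𝔞 hw
  refine ⟨?_, fun z => ?_⟩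
  · rw [mul_comm, ← frobenius_verschiebung, hF _ (verschiebung_coeff_mem hy)]
  · rw [← verschiebung_mul_frobenius, hF _ hy, mul_zero, map_zero]
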